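/- arXiv:2112.08121 — 2 statements merged into one kernel-verified Lean document; each statement's English description precedes it below -/
import Mathlib

section
/- With Ω positive definite, A invertible, and W positive definite, there exists β̃ ∈ (0,1) (depending on bounds c₁ I ≤ Ω ≤ c₂ I and on W, A) such that (A Ω^{-1} A^T + W^{-1})^{-1} ≤ β̃ · A^{-T} Ω A^{-1}. -/
/-! With `S = A Ω⁻¹ Aᵀ`, the band `c₁ I ≤ Ω` gives `S ≤ (a / c₁) I` whenever `A Aᵀ ≤ a I`, while
`W ≤ w I` gives `W⁻¹ ≥ w⁻¹ I`. Hence `W⁻¹ ≥ t S` with `t = c₁ / (a w)` independent of `Ω`, so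
`S + W⁻¹ ≥ (1 + t) S`, and since inversion reverses the Loewner order,
`(S + W⁻¹)⁻¹ ≤ (1 + t)⁻¹ S⁻¹ = (1 + t)⁻¹ A⁻ᵀ Ω A⁻¹`. -/

open Matrix
open scoped MatrixOrder ComplexOrder

lemma IsSelfAdjoint.exists_pos_le_smul_one {A : Type*} [TopologicalSpace A] [Ring A]
    [StarRing A] [PartialOrder A] [StarOrderedRing A] [Algebra ℝ A] [NonnegSpectrumClass ℝ A]
    [ContinuousFunctionalCalculus ℝ A IsSelfAdjoint] {a : A} (ha : IsSelfAdjoint a) :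
    ∃ r : ℝ, 0 < r ∧ a ≤ r • 1 := by
  obtain ⟨r, hr⟩ := (ContinuousFunctionalCalculus.isCompact_spectrum (R := ℝ) a).bddAbove
  exact ⟨max r 1, by positivity,
    Algebra.algebraMap_eq_smul_one (R := ℝ) (A := A) _ ▸
      (le_algebraMap_iff_spectrum_le ha).2 fun x hx => (hr hx).trans (le_max_left r 1)⟩

namespace Matrix

variable {𝕜 : Type*} [RCLike 𝕜] {n : Type*} [DecidableEq n]

lemma posDef_of_smul_one_le {c : ℝ} (hc : 0 < c) {Ω : Matrix n n 𝕜} (h : c • 1 ≤ Ω) :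
    Ω.PosDef := by
  simpa using (PosDef.one.smul hc).add_posSemidef h

variable [Fintype n]

lemma inv_smul_of_ne_zero (S : Matrix n n 𝕜) (hS : IsUnit S.det) {c : ℝ} (hc : c ≠ 0) :
    (c • S)⁻¹ = c⁻¹ • S⁻¹ := by
  refine inv_eq_left_inv ?_
  rw [smul_mul_smul_comm, inv_mul_cancel₀ hc, nonsing_inv_mul S hS, one_smul]

lemma inv_smul_one (c : ℝ) : (c • 1 : Matrix n n 𝕜)⁻¹ = c⁻¹ • 1 := by
  rcases eq_or_ne c 0 with rfl | hc
  · simp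
  · rw [inv_smul_of_ne_zero 1 (by simp) hc, inv_one]

lemma PosDef.inv_le_inv_of_le {X Y : Matrix n n 𝕜} (hX : X.PosDef) (hXY : X ≤ Y) :
    Y⁻¹ ≤ X⁻¹ := by
  have hY : Y.PosDef := by simpa using hX.add_posSemidef hXY
  have hXu := (isUnit_iff_isUnit_det X).mp hX.isUnit
  have hYu := (isUnit_iff_isUnit_det Y).mp hY.isUnit
  obtain ⟨D, hD, rfl⟩ : ∃ D, 0 ≤ D ∧ Y = X + D := ⟨Y - X, sub_nonneg.mpr hXY, by abel⟩
  -- `Y X⁻¹ Y - Y = D + D X⁻¹ D` for `Y = X + D`; conjugating by `Y⁻¹` then gives the claim.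
  have key : X + D ≤ (X + D) * X⁻¹ * (X + D) := by
    have expand : (X + D) * X⁻¹ * (X + D) = X + D + (D + D * X⁻¹ * D) := by
      simp only [Matrix.add_mul, Matrix.mul_add, mul_nonsing_inv X hXu, Matrix.one_mul,
        nonsing_inv_mul_cancel_right X D hXu]
    rw [expand]
    refine le_add_of_nonneg_right (add_nonneg hD ?_)
    simpa [hD.posSemidef.isHermitian.eq, Matrix.mul_assoc] using
      (hX.inv.posSemidef.conjTranspose_mul_mul_same D).nonneg
  simpa [Matrix.mul_assoc, nonsing_inv_mul _ hYu, mul_nonsing_inv _ hYu,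
    nonsing_inv_mul_cancel_left _ _ hYu] using
    IsSelfAdjoint.conjugate_le_conjugate key hY.inv.isHermitian

lemma mul_inv_mul_conjTranspose_le_smul_one {A Ω : Matrix n n 𝕜} {a c : ℝ} (hc : 0 < c)
    (hΩ : c • 1 ≤ Ω) (hA : A * Aᴴ ≤ a • 1) : A * Ω⁻¹ * Aᴴ ≤ (a / c) • 1 := calc
  A * Ω⁻¹ * Aᴴ ≤ A * (c⁻¹ • 1) * Aᴴ := by
    have hΩinv := (PosDef.one.smul hc).inv_le_inv_of_le hΩ
    rw [inv_smul_one] at hΩinv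
    exact star_right_conjugate_le_conjugate hΩinv A
  _ = c⁻¹ • (A * Aᴴ) := by simp
  _ ≤ c⁻¹ • (a • 1) := by gcongr
  _ = (a / c) • 1 := by rw [smul_smul, inv_mul_eq_div]

lemma PosDef.inv_add_le_smul_inv {S Q : Matrix n n 𝕜} (hS : S.PosDef) {t : ℝ} (ht : 0 ≤ t)
    (h : t • S ≤ Q) : (S + Q)⁻¹ ≤ (1 + t)⁻¹ • S⁻¹ := by
  have hle : (1 + t) • S ≤ S + Q := by rw [add_smul, one_smul]; exact add_le_add_right h S
  rw [← inv_smul_of_ne_zero S ((isUnit_iff_isUnit_det S).mp hS.isUnit) (by positivity)]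
  exact (hS.smul (by positivity : (0 : ℝ) < 1 + t)).inv_le_inv_of_le hle

end Matrix

theorem prediction_map_strict_contraction_general {n : ℕ}
    (A W : Matrix (Fin n) (Fin n) ℝ)
    (hA : IsUnit A.det) (hW : W.PosDef)
    (c₁ c₂ : ℝ) (hc₁ : 0 < c₁) :
    ∃ β : ℝ, 0 < β ∧ β < 1 ∧
      ∀ Ω : Matrix (Fin n) (Fin n) ℝ, Ω.IsSymm →
        (Ω - c₁ • 1).PosSemidef →
        (c₂ • (1 : Matrix (Fin n) (Fin n) ℝ) - Ω).PosSemidef →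
        (β • ((A.transpose)⁻¹ * Ω * A⁻¹) - (A * Ω⁻¹ * A.transpose + W⁻¹)⁻¹).PosSemidef := by
  rw [← conjTranspose_eq_transpose_of_trivial]
  obtain ⟨a, ha, hAA⟩ : ∃ a : ℝ, 0 < a ∧ A * Aᴴ ≤ a • 1 :=
    IsSelfAdjoint.exists_pos_le_smul_one (isHermitian_mul_conjTranspose_self A)
  obtain ⟨w, hw, hWw⟩ := IsSelfAdjoint.exists_pos_le_smul_one hW.isHermitian
  set t := c₁ / (a * w) with ht_def
  have ht : 0 < t := by positivity
  refine ⟨(1 + t)⁻¹, by positivity, inv_lt_one_of_one_lt₀ (by linarith), fun Ω _ hΩc₁ _ => ?_⟩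
  have hΩ : Ω.PosDef := posDef_of_smul_one_le hc₁ hΩc₁
  have hS : (A * Ω⁻¹ * Aᴴ).PosDef := hΩ.inv.mul_mul_conjTranspose_same
    (vecMul_injective_iff_isUnit.mpr ((isUnit_iff_isUnit_det A).mpr hA))
  have htS : t • (A * Ω⁻¹ * Aᴴ) ≤ W⁻¹ := calc
    t • (A * Ω⁻¹ * Aᴴ) ≤ t • ((a / c₁) • 1) := by
      gcongr; exact mul_inv_mul_conjTranspose_le_smul_one hc₁ hΩc₁ hAA
    _ = w⁻¹ • 1 := by rw [smul_smul, ht_def]; congr 1; field_simp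
    _ ≤ W⁻¹ := inv_smul_one (n := Fin n) (𝕜 := ℝ) w ▸ hW.inv_le_inv_of_le hWw
  have hSinv : (A * Ω⁻¹ * Aᴴ)⁻¹ = Aᴴ⁻¹ * Ω * A⁻¹ := by
    rw [Matrix.mul_inv_rev, Matrix.mul_inv_rev,
      nonsing_inv_nonsing_inv Ω ((isUnit_iff_isUnit_det Ω).mp hΩ.isUnit), Matrix.mul_assoc]
  exact hSinv ▸ hS.inv_add_le_smul_inv ht.le htS

/-- With `A` invertible, `W ≻ 0`, there exists `β̃ ∈ (0,1)` (depending only on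
the bounds `c₁ I ≤ Ω ≤ c₂ I`, on `W` and on `A`) such that
`(A Ω⁻¹ Aᵀ + W⁻¹)⁻¹ ≤ β̃ · A⁻ᵀ Ω A⁻¹` for every symmetric `Ω` in the band. -/
theorem prediction_map_strict_contraction {n : ℕ}
    (A W : Matrix (Fin n) (Fin n) ℝ)
    (hA : IsUnit A.det) (hW : W.PosDef)
    (c₁ c₂ : ℝ) (hc₁ : 0 < c₁) (hc : c₁ ≤ c₂) :
    ∃ β : ℝ, 0 < β ∧ β < 1 ∧
      ∀ Ω : Matrix (Fin n) (Fin n) ℝ, Ω.IsSymm →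
        (Ω - c₁ • 1).PosSemidef →
        (c₂ • (1 : Matrix (Fin n) (Fin n) ℝ) - Ω).PosSemidef →
        (β • ((A.transpose)⁻¹ * Ω * A⁻¹) - (A * Ω⁻¹ * A.transpose + W⁻¹)⁻¹).PosSemidef :=
  prediction_map_strict_contraction_general A W hA hW c₁ c₂ hc₁
end

section
/- Let Ω₁,...,Ω_k be symmetric positive definite n×n matrices, w₁,...,w_k ≥ 0 with ∑ w_j > 0, and set Ω = ∑_j w_j Ω_j. Then for any vectors x₁,...,x_k ∈ ℝⁿ, (∑_j w_j Ω_j x_j)^T Ω^{-1} (∑_j w_j Ω_j x_j) ≤ ∑_j w_j x_j^T Ω_j x_j. -/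
/-!
For each positive semidefinite `Ωⱼ` and any `y`, expanding `0 ≤ (xⱼ - y)ᵀ Ωⱼ (xⱼ - y)` gives
`2 yᵀ Ωⱼ xⱼ - yᵀ Ωⱼ y ≤ xⱼᵀ Ωⱼ xⱼ`. Summing with the weights yields
`2 yᵀ v - yᵀ Ω y ≤ ∑ⱼ wⱼ xⱼᵀ Ωⱼ xⱼ` with `v = ∑ⱼ wⱼ Ωⱼ xⱼ`, and the choice `y = Ω⁻¹ v` turns the
left-hand side into `vᵀ Ω⁻¹ v`.
-/

open Matrix

namespace Matrix

variable {m ι : Type*} [Fintype m] [Fintype ι]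

theorem PosSemidef.two_mul_dotProduct_mulVec_sub_le {A : Matrix m m ℝ} (hA : A.PosSemidef)
    (x y : m → ℝ) : 2 * (y ⬝ᵥ A *ᵥ x) - y ⬝ᵥ A *ᵥ y ≤ x ⬝ᵥ A *ᵥ x := by
  have hsymm : x ⬝ᵥ A *ᵥ y = y ⬝ᵥ A *ᵥ x := by
    rw [dotProduct_mulVec, ← mulVec_transpose, (isHermitian_iff_isSymm.mp hA.isHermitian).eq,
      dotProduct_comm]
  have hnonneg : 0 ≤ (x - y) ⬝ᵥ A *ᵥ (x - y) := hA.dotProduct_mulVec_nonneg (x - y)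
  rw [mulVec_sub, sub_dotProduct, dotProduct_sub, dotProduct_sub, hsymm] at hnonneg
  linarith

theorem two_mul_dotProduct_sum_sub_le {Ω : ι → Matrix m m ℝ} (hΩ : ∀ j, (Ω j).PosSemidef)
    {w : ι → ℝ} (hw : ∀ j, 0 ≤ w j) (x : ι → m → ℝ) (y : m → ℝ) :
    2 * (y ⬝ᵥ ∑ j, w j • Ω j *ᵥ x j) - y ⬝ᵥ (∑ j, w j • Ω j) *ᵥ y ≤
      ∑ j, w j * (x j ⬝ᵥ Ω j *ᵥ x j) := calc
  _ = ∑ j, w j * (2 * (y ⬝ᵥ Ω j *ᵥ x j) - y ⬝ᵥ Ω j *ᵥ y) := by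
    simp only [dotProduct_sum, sum_mulVec, smul_mulVec, dotProduct_smul, smul_eq_mul, mul_sub,
      Finset.sum_sub_distrib, Finset.mul_sum, mul_left_comm (2 : ℝ)]
  _ ≤ _ := Finset.sum_le_sum fun j _ ↦
    mul_le_mul_of_nonneg_left ((hΩ j).two_mul_dotProduct_mulVec_sub_le (x j) y) (hw j)

end Matrix

theorem weighted_jensen_quadratic_general {n k : ℕ}
    (Ω : Fin k → Matrix (Fin n) (Fin n) ℝ)
    (hΩ : ∀ j, (Ω j).PosDef)
    (w : Fin k → ℝ) (hw : ∀ j, 0 ≤ w j)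
    (hinv : IsUnit (∑ j, w j • Ω j).det)
    (x : Fin k → Fin n → ℝ) :
    ((∑ j, w j • (Ω j).mulVec (x j)) ⬝ᵥ
        ((∑ j, w j • Ω j)⁻¹).mulVec (∑ j, w j • (Ω j).mulVec (x j))) ≤
      ∑ j, w j * ((x j) ⬝ᵥ ((Ω j).mulVec (x j))) := by
  set S := ∑ j, w j • Ω j
  set v := ∑ j, w j • Ω j *ᵥ x j
  have hSy : S *ᵥ (S⁻¹ *ᵥ v) = v := by
    rw [mulVec_mulVec, mul_nonsing_inv _ hinv, one_mulVec]
  have key := two_mul_dotProduct_sum_sub_le (fun j ↦ (hΩ j).posSemidef) hw x (S⁻¹ *ᵥ v)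
  rw [hSy, dotProduct_comm (S⁻¹ *ᵥ v)] at key
  linarith

/-- Weighted Jensen-type quadratic inequality: for positive definite `Ω j`,
nonnegative weights `w j` with positive sum, and `Ω = ∑ j, w j • Ω j` invertible,
`(∑ j, w j • Ω j x j)ᵀ Ω⁻¹ (∑ j, w j • Ω j x j) ≤ ∑ j, w j * x jᵀ Ω j x j`. -/
theorem weighted_jensen_quadratic {n k : ℕ}
    (Ω : Fin k → Matrix (Fin n) (Fin n) ℝ)
    (hΩ : ∀ j, (Ω j).PosDef)
    (w : Fin k → ℝ) (hw : ∀ j, 0 ≤ w j) (hwsum : 0 < ∑ j, w j)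
    (hinv : IsUnit (∑ j, w j • Ω j).det)
    (x : Fin k → Fin n → ℝ) :
    ((∑ j, w j • (Ω j).mulVec (x j)) ⬝ᵥ
        ((∑ j, w j • Ω j)⁻¹).mulVec (∑ j, w j • (Ω j).mulVec (x j))) ≤
      ∑ j, w j * ((x j) ⬝ᵥ ((Ω j).mulVec (x j))) :=
  weighted_jensen_quadratic_general Ω hΩ w hw hinv x
end
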